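/- arXiv:2102.08454 — 5 statements merged into one kernel-verified Lean document; each statement's English description precedes it below -/
import Mathlib

section
/- If H is a convex set of models, each group loss L_k : H → ℝ≥0 is a convex function, and each slack mapping ε_j : H → ℝ is concave, then each set F_(j) in the convex-lexifair hierarchy is convex. -/
/-- `Mtop L j h` is the maximum, over all size-j subsets of the K groups,
of the sum of group losses of model h (i.e. the sum of the j largest group losses). -/
noncomputable def Mtop {K : ℕ} {V : Type*} (L : Fin K → V → ℝ) (j : ℕ) (h : V) : ℝ :=
  sSup ((fun s : Finset (Fin K) => ∑ i ∈ s, L i h) ''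
    ↑(Finset.powersetCard j (Finset.univ : Finset (Fin K))))

/-- The convex-lexifair hierarchy: F₍₀₎ = H, and
F₍ⱼ₎ = { h ∈ F₍ⱼ₋₁₎ : Mtop j h ≤ inf over F₍ⱼ₋₁₎ of Mtop j + ε_j(h) }. -/
noncomputable def Fset {K : ℕ} {V : Type*} (L : Fin K → V → ℝ) (H : Set V)
    (ε : ℕ → V → ℝ) : ℕ → Set V
  | 0 => H
  | (j + 1) =>
    {h ∈ Fset L H ε j |
      Mtop L (j + 1) h ≤ sInf (Mtop L (j + 1) '' Fset L H ε j) + ε (j + 1) h}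

lemma Fset_subset {K : ℕ} {V : Type*} (L : Fin K → V → ℝ) (H : Set V)
    (ε : ℕ → V → ℝ) : ∀ j, Fset L H ε j ⊆ H := by
  intro j
  induction j with
  | zero => exact le_refl _
  | succ n ih => exact fun h hh => ih hh.1

lemma Mtop_convexOn {K : ℕ} {V : Type*} [AddCommGroup V] [Module ℝ V]
    (H : Set V) (hH : Convex ℝ H)
    (L : Fin K → V → ℝ) (hL : ∀ k, ConvexOn ℝ H (L k)) (j : ℕ) :
    ConvexOn ℝ H (Mtop L j) := by
  refine ⟨hH, ?_⟩
  intro x hx y hy a b ha hb hab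
  set P := Finset.powersetCard j (Finset.univ : Finset (Fin K)) with hP
  by_cases hPe : P = ∅
  · simp [Mtop, ← hP, hPe]
  · have hPne : (P : Set (Finset (Fin K))).Nonempty := by
      rcases Finset.nonempty_iff_ne_empty.2 hPe with ⟨s, hs⟩
      exact ⟨s, hs⟩
    have hbddx : BddAbove ((fun s : Finset (Fin K) => ∑ i ∈ s, L i x) '' ↑P) :=
      (Set.Finite.image _ (Finset.finite_toSet P)).bddAbove
    have hbddy : BddAbove ((fun s : Finset (Fin K) => ∑ i ∈ s, L i y) '' ↑P) :=
      (Set.Finite.image _ (Finset.finite_toSet P)).bddAbove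
    have key : Mtop L j (a • x + b • y) ≤ a * Mtop L j x + b * Mtop L j y := by
      apply csSup_le (hPne.image _)
      rintro r ⟨s, hs, rfl⟩
      have h1 : ∑ i ∈ s, L i (a • x + b • y) ≤
          a * (∑ i ∈ s, L i x) + b * (∑ i ∈ s, L i y) := by
        rw [Finset.mul_sum, Finset.mul_sum, ← Finset.sum_add_distrib]
        exact Finset.sum_le_sum fun i _ => (hL i).2 hx hy ha hb hab
      have h2 : (∑ i ∈ s, L i x) ≤ Mtop L j x :=
        le_csSup hbddx ⟨s, hs, rfl⟩
      have h3 : (∑ i ∈ s, L i y) ≤ Mtop L j y :=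
        le_csSup hbddy ⟨s, hs, rfl⟩
      calc ∑ i ∈ s, L i (a • x + b • y) ≤ a * (∑ i ∈ s, L i x) + b * (∑ i ∈ s, L i y) := h1
        _ ≤ a * Mtop L j x + b * Mtop L j y := by
            gcongr
    simpa [smul_eq_mul] using key

/-- If H is a convex set of models, each group loss L_k is convex (and nonnegative)
on H, and each slack mapping ε_j is concave on H, then every level of the
convex-lexifair hierarchy is a convex set. -/
theorem stmt_3 {K : ℕ} {V : Type*} [AddCommGroup V] [Module ℝ V]
    (H : Set V) (hH : Convex ℝ H)
    (L : Fin K → V → ℝ) (hL : ∀ k, ConvexOn ℝ H (L k))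
    (hL0 : ∀ k, ∀ h ∈ H, 0 ≤ L k h)
    (ε : ℕ → V → ℝ) (hε : ∀ j, ConcaveOn ℝ H (ε j)) :
    ∀ j, Convex ℝ (Fset L H ε j) := by
  intro j
  induction j with
  | zero => exact hH
  | succ n ih =>
    intro x hx y hy a b ha hb hab
    have hxH : x ∈ H := Fset_subset L H ε (n+1) hx
    have hyH : y ∈ H := Fset_subset L H ε (n+1) hy
    have hzF : a • x + b • y ∈ Fset L H ε n := ih hx.1 hy.1 ha hb hab
    refine ⟨hzF, ?_⟩
    have hM := (Mtop_convexOn H hH L hL (n+1)).2 hxH hyH ha hb hab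
    have hE := (hε (n+1)).2 hxH hyH ha hb hab
    have hxi := hx.2
    have hyi := hy.2
    simp only [smul_eq_mul] at hM hE
    have hc : a * sInf (Mtop L (n+1) '' Fset L H ε n) + b * sInf (Mtop L (n+1) '' Fset L H ε n)
        = sInf (Mtop L (n+1) '' Fset L H ε n) := by rw [← add_mul, hab, one_mul]
    linarith [mul_le_mul_of_nonneg_left hxi ha, mul_le_mul_of_nonneg_left hyi hb]
end

section
/- If ((ĥ, η̂_j), λ̂) is a ν-approximate equilibrium of the Lagrangian game, then η̂_j ≤ OPT_j + 2ν, where OPT_j is the optimal value of the constrained problem. -/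
/-- The index set of dual variables: nonempty subsets of the K groups of size at most j. -/
def Dset (K j : ℕ) : Finset (Finset (Fin K)) :=
  (Finset.univ : Finset (Finset (Fin K))).filter (fun S => S.Nonempty ∧ S.card ≤ j)

/-- The Lagrangian of the j-th lexifair constrained problem. -/
def Lag {K : ℕ} {M : Type*} (L : Fin K → M → ℝ) (j : ℕ) (η : ℕ → ℝ)
    (h : M) (ηj : ℝ) (lam : Finset (Fin K) → ℝ) : ℝ :=
  ηj + ∑ S ∈ Dset K j,
    lam S * ((∑ i ∈ S, L i h) - (if S.card = j then ηj else η S.card))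

/-- If ((ĥ, η̂_j), λ̂) is a ν-approximate equilibrium of the Lagrangian game,
then η̂_j is at most the optimal value OPT_j of the feasible constrained
problem plus 2ν. -/
theorem stmt_9 {K : ℕ} {M : Type*} (L : Fin K → M → ℝ) (j : ℕ) (hj : 1 ≤ j)
    (LM : ℝ) (hLM : 0 ≤ LM) (hL : ∀ k h, L k h ∈ Set.Icc 0 LM)
    (η : ℕ → ℝ) (B ν : ℝ) (hB : 0 ≤ B) (hν : 0 ≤ ν)
    (hhat : M) (ηhatj : ℝ) (hηhatj : ηhatj ∈ Set.Icc (0 : ℝ) (j * LM))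
    (lamhat : Finset (Fin K) → ℝ)
    (hlam1 : ∀ S, 0 ≤ lamhat S) (hlam2 : ∑ S ∈ Dset K j, lamhat S ≤ B)
    (hfeas : ∃ h : M, ∃ x ∈ Set.Icc (0 : ℝ) (j * LM),
      ∀ S ∈ Dset K j, (∑ i ∈ S, L i h) ≤ (if S.card = j then x else η S.card))
    (heq1 : ∀ (h : M), ∀ x ∈ Set.Icc (0 : ℝ) (j * LM),
      Lag L j η hhat ηhatj lamhat ≤ Lag L j η h x lamhat + ν)
    (heq2 : ∀ lam : Finset (Fin K) → ℝ, (∀ S, 0 ≤ lam S) →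
      (∑ S ∈ Dset K j, lam S ≤ B) →
      Lag L j η hhat ηhatj lam ≤ Lag L j η hhat ηhatj lamhat + ν) :
    ηhatj ≤ sInf {x : ℝ | ∃ h : M, x ∈ Set.Icc (0 : ℝ) (j * LM) ∧
      ∀ S ∈ Dset K j, (∑ i ∈ S, L i h) ≤ (if S.card = j then x else η S.card)}
      + 2 * ν := by
  have hset : {x : ℝ | ∃ h : M, x ∈ Set.Icc (0 : ℝ) (j * LM) ∧
      ∀ S ∈ Dset K j, (∑ i ∈ S, L i h) ≤ (if S.card = j then x else η S.card)}.Nonempty := by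
    obtain ⟨h, x, hx, hc⟩ := hfeas
    exact ⟨x, h, hx, hc⟩
  -- lower bound on Lagrangian value via λ = 0
  have h0 : ηhatj - ν ≤ Lag L j η hhat ηhatj lamhat := by
    have h := heq2 (fun _ => 0) (fun _ => le_refl 0) (by simp [hB])
    simp only [Lag, zero_mul, Finset.sum_const_zero, add_zero] at h
    simp only [Lag]
    linarith
  rw [← sub_le_iff_le_add]
  apply le_csInf hset
  rintro x ⟨h, hx, hc⟩
  -- Lag at (h, x, lamhat) ≤ x
  have hLag : Lag L j η h x lamhat ≤ x := by
    unfold Lag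
    have : ∑ S ∈ Dset K j,
        lamhat S * ((∑ i ∈ S, L i h) - (if S.card = j then x else η S.card)) ≤ 0 := by
      apply Finset.sum_nonpos
      intro S hS
      exact mul_nonpos_of_nonneg_of_nonpos (hlam1 S) (by linarith [hc S hS])
    linarith
  have := heq1 h x hx
  linarith
end

section
/- If ((ĥ, η̂_j), λ̂) is a ν-approximate equilibrium of the Lagrangian game with dual bound B, then for all r ≤ j, the maximum over size-r subsets of groups of the sum of group losses of ĥ is at most η̂_r + (j·L_M + 2ν)/B. -/
/-- If ((ĥ, η̂_j), λ̂) is a ν-approximate equilibrium of the Lagrangian game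
with dual ℓ1-bound B > 0 and the constrained problem is feasible, then for all
1 ≤ r ≤ j, the maximum over size-r subsets of groups of the sum of group losses
of ĥ is at most η̂_r + (j·L_M + 2ν)/B. -/
theorem stmt_10 {K : ℕ} {M : Type*} (L : Fin K → M → ℝ) (j : ℕ) (hj : 1 ≤ j)
    (LM : ℝ) (hLM : 0 ≤ LM) (hL : ∀ k h, L k h ∈ Set.Icc 0 LM)
    (η : ℕ → ℝ) (B ν : ℝ) (hB : 0 < B) (hν : 0 ≤ ν)
    (hhat : M) (ηhatj : ℝ) (hηhatj : ηhatj ∈ Set.Icc (0 : ℝ) (j * LM))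
    (lamhat : Finset (Fin K) → ℝ)
    (hlam1 : ∀ S, 0 ≤ lamhat S) (hlam2 : ∑ S ∈ Dset K j, lamhat S ≤ B)
    (hfeas : ∃ h : M, ∃ x ∈ Set.Icc (0 : ℝ) (j * LM),
      ∀ S ∈ Dset K j, (∑ i ∈ S, L i h) ≤ (if S.card = j then x else η S.card))
    (heq1 : ∀ (h : M), ∀ x ∈ Set.Icc (0 : ℝ) (j * LM),
      Lag L j η hhat ηhatj lamhat ≤ Lag L j η h x lamhat + ν)
    (heq2 : ∀ lam : Finset (Fin K) → ℝ, (∀ S, 0 ≤ lam S) →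
      (∑ S ∈ Dset K j, lam S ≤ B) →
      Lag L j η hhat ηhatj lam ≤ Lag L j η hhat ηhatj lamhat + ν) :
    ∀ r : ℕ, 1 ≤ r → r ≤ j →
      ∀ S ∈ Finset.powersetCard r (Finset.univ : Finset (Fin K)),
        (∑ i ∈ S, L i hhat)
          ≤ (if r = j then ηhatj else η r) + (j * LM + 2 * ν) / B := by
  intro r hr1 hrj S hS
  rw [Finset.mem_powersetCard] at hS
  obtain ⟨-, hcard⟩ := hS
  have hSne : S.Nonempty := Finset.card_pos.mp (by omega)
  have hSD : S ∈ Dset K j := by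
    simp [Dset, hSne, hcard, hrj]
  -- Step 1: Lag at (hhat, ηhatj, lamhat) ≤ j*LM + ν using feasibility and heq1
  obtain ⟨h0, x0, hx0, hfe⟩ := hfeas
  have hLagfe : Lag L j η h0 x0 lamhat ≤ x0 := by
    unfold Lag
    have : ∑ T ∈ Dset K j,
        lamhat T * ((∑ i ∈ T, L i h0) - (if T.card = j then x0 else η T.card)) ≤ 0 := by
      apply Finset.sum_nonpos
      intro T hT
      exact mul_nonpos_of_nonneg_of_nonpos (hlam1 T) (by linarith [hfe T hT])
    linarith
  have hub : Lag L j η hhat ηhatj lamhat ≤ j * LM + ν := by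
    have := heq1 h0 x0 hx0
    have := hx0.2
    linarith
  -- Step 2: use heq2 with lam = B·1_S
  set lam : Finset (Fin K) → ℝ := fun T => if T = S then B else 0 with hlamdef
  have hsum : ∑ T ∈ Dset K j, lam T = B := by
    rw [hlamdef]
    rw [Finset.sum_ite_eq' (Dset K j) S (fun _ => B)]
    simp [hSD]
  have hLaglam : Lag L j η hhat ηhatj lam
      = ηhatj + B * ((∑ i ∈ S, L i hhat) - (if r = j then ηhatj else η r)) := by
    unfold Lag
    congr 1
    rw [hlamdef]
    have : ∀ T ∈ Dset K j, (if T = S then B else 0) *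
        ((∑ i ∈ T, L i hhat) - (if T.card = j then ηhatj else η T.card))
        = if T = S then B * ((∑ i ∈ T, L i hhat) - (if T.card = j then ηhatj else η T.card)) else 0 := by
      intro T _; split <;> simp
    rw [Finset.sum_congr rfl this, Finset.sum_ite_eq' (Dset K j)]
    simp [hSD, hcard]
  have h2 := heq2 lam (by intro T; rw [hlamdef]; dsimp; split <;> [exact le_of_lt hB; rfl]) (le_of_eq hsum)
  rw [hLaglam] at h2
  have hη0 : 0 ≤ ηhatj := hηhatj.1
  have hkey : B * ((∑ i ∈ S, L i hhat) - (if r = j then ηhatj else η r)) ≤ j * LM + 2 * ν := by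
    linarith
  rw [mul_comm] at hkey
  have : (∑ i ∈ S, L i hhat) - (if r = j then ηhatj else η r) ≤ (j * LM + 2 * ν) / B :=
    (le_div_iff₀ hB).mpr hkey
  linarith
end

section
/- If uniform convergence of per-group losses holds at level β, and a model h satisfies (ℓ, α)-lexicographic fairness with respect to the sample S, then h satisfies (ℓ, α + 2β)-lexicographic fairness with respect to the distribution P. -/
/-- `sortL L h j` is the (j+1)-th highest group loss of model h (0-indexed j),
obtained by sorting the K group losses of h in decreasing order. -/
noncomputable def sortL {K : ℕ} {M : Type*} (L : Fin K → M → ℝ) (h : M) (j : ℕ) : ℝ :=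
  if hj : j < K then L (Tuple.sort (fun k => L k h) (Fin.rev ⟨j, hj⟩)) h else 0

open Classical in
/-- one-sided comparison of sorted tuples -/
lemma sort_comp_le {K : ℕ} (a b : Fin K → ℝ) (β : ℝ) (hβ : 0 ≤ β)
    (hab : ∀ k, a k ≤ b k + β) (i : Fin K) :
    a (Tuple.sort a i) ≤ b (Tuple.sort b i) + β := by
  set c : ℝ := b (Tuple.sort b i) + β with hc
  have hb : (i : ℕ) < Fintype.card {k // (b ∘ Tuple.sort b) k ≤ b (Tuple.sort b i)} :=
    by rw [Fintype.card_subtype]; convert (Tuple.lt_card_le_iff_apply_le_of_monotone (f := b ∘ Tuple.sort b) (j := i) (a := b (Tuple.sort b i)) (Tuple.monotone_sort b)).2 le_rfl using 3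
  have e1 : Fintype.card {k // (b ∘ Tuple.sort b) k ≤ b (Tuple.sort b i)}
      = Fintype.card {k // b k ≤ b (Tuple.sort b i)} :=
    Fintype.card_congr ((Tuple.sort b).subtypeEquiv (fun k => Iff.rfl))
  have e2 : Fintype.card {k // a k ≤ c}
      = Fintype.card {k // (a ∘ Tuple.sort a) k ≤ c} :=
    (Fintype.card_congr ((Tuple.sort a).subtypeEquiv (fun k => Iff.rfl))).symm
  have hmono : Fintype.card {k // b k ≤ b (Tuple.sort b i)}
      ≤ Fintype.card {k // a k ≤ c} := by
    apply Fintype.card_subtype_mono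
    intro k hk
    calc a k ≤ b k + β := hab k
    _ ≤ c := by rw [hc]; linarith
  have : (i : ℕ) < Fintype.card {k // (a ∘ Tuple.sort a) k ≤ c} := by
    omega
  rw [Fintype.card_subtype] at this
  exact (Tuple.lt_card_le_iff_apply_le_of_monotone (Tuple.monotone_sort a)).1 (by convert this)

lemma abs_sortL_le {K : ℕ} {M : Type*} (LS LP : Fin K → M → ℝ) (β : ℝ) (hβ : 0 ≤ β)
    (huc : ∀ (h : M) (k : Fin K), |LS k h - LP k h| ≤ β) (h : M) (j : ℕ) :
    |sortL LS h j - sortL LP h j| ≤ β := by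
  unfold sortL
  by_cases hj : j < K
  · simp only [hj, dif_pos]
    rw [abs_sub_le_iff]
    constructor
    · have := sort_comp_le (fun k => LS k h) (fun k => LP k h) β hβ
        (fun k => by have := abs_sub_le_iff.1 (huc h k); linarith [this.1]) (Fin.rev ⟨j, hj⟩)
      linarith
    · have := sort_comp_le (fun k => LP k h) (fun k => LS k h) β hβ
        (fun k => by have := abs_sub_le_iff.1 (huc h k); linarith [this.2]) (Fin.rev ⟨j, hj⟩)
      linarith
  · simp [hj, hβ]

lemma sInf_image_le {M : Type*} (fS fP : M → ℝ) (β : ℝ) (hβ : 0 ≤ β)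
    (hcl : ∀ x, |fS x - fP x| ≤ β) (H : Set M) :
    sInf (fS '' H) ≤ sInf (fP '' H) + β := by
  rcases H.eq_empty_or_nonempty with rfl | hne
  · simp [Set.image_empty, Real.sInf_empty, hβ]
  by_cases hbd : BddBelow (fS '' H)
  · have hbdP : BddBelow (fP '' H) := by
      obtain ⟨m, hm⟩ := hbd
      refine ⟨m - β, ?_⟩
      rintro _ ⟨x, hx, rfl⟩
      have := hm ⟨x, hx, rfl⟩
      have := abs_sub_le_iff.1 (hcl x)
      simp only [mem_lowerBounds] at *
      linarith [this.1]
    rw [← sub_le_iff_le_add]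
    apply le_csInf (hne.image _)
    rintro _ ⟨x, hx, rfl⟩
    have h1 : sInf (fS '' H) ≤ fS x := csInf_le hbd ⟨x, hx, rfl⟩
    have := abs_sub_le_iff.1 (hcl x)
    linarith [this.1]
  · have hbdP : ¬ BddBelow (fP '' H) := by
      intro ⟨m, hm⟩
      apply hbd
      refine ⟨m - β, ?_⟩
      rintro _ ⟨x, hx, rfl⟩
      have := hm ⟨x, hx, rfl⟩
      have := abs_sub_le_iff.1 (hcl x)
      simp only [mem_lowerBounds] at *
      linarith [this.2]
    rw [Real.sInf_of_not_bddBelow hbd, Real.sInf_of_not_bddBelow hbdP]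
    linarith

/-- (ℓ, α)-lexicographic fairness of model h w.r.t. group losses L: there is a
slack sequence ε with ‖ε‖_∞ ≤ α such that, with H₍₀₎ = all models and
H₍ⱼ₎ = { h' ∈ H₍ⱼ₋₁₎ : (j-th highest loss of h') ≤ inf over H₍ⱼ₋₁₎ of the j-th
highest loss + ε_j(h') }, the model h satisfies, for all 1 ≤ j ≤ ℓ:
(j-th highest loss of h) ≤ inf over H₍ⱼ₋₁₎ + ε_j(h) + α. -/
def Lexifair {K : ℕ} {M : Type*} (L : Fin K → M → ℝ) (ℓ : ℕ) (α : ℝ)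
    (h : M) : Prop :=
  ∃ ε : ℕ → M → ℝ, (∀ j h', ε j h' ≤ α) ∧
    ∃ Hs : ℕ → Set M, Hs 0 = Set.univ ∧
      (∀ j, Hs (j + 1) = {h' ∈ Hs j |
        sortL L h' j ≤ sInf ((fun g => sortL L g j) '' Hs j) + ε (j + 1) h'}) ∧
      ∀ j, j < ℓ →
        sortL L h j ≤ sInf ((fun g => sortL L g j) '' Hs j) + ε (j + 1) h + α

/-- Generalization for lexifairness: if empirical (LS) and distributional (LP)
per-group losses are uniformly within β and h is (ℓ, α)-lexicographically fair
w.r.t. the sample, then h is (ℓ, α + 2β)-lexicographically fair w.r.t. the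
distribution. -/
theorem stmt_15 {K : ℕ} {M : Type*} (LS LP : Fin K → M → ℝ)
    (β α : ℝ) (hβ : 0 ≤ β) (hα : 0 ≤ α)
    (huc : ∀ (h : M) (k : Fin K), |LS k h - LP k h| ≤ β)
    (ℓ : ℕ) (hℓ : ℓ ≤ K) (h : M)
    (hfair : Lexifair LS ℓ α h) :
    Lexifair LP ℓ (α + 2 * β) h := by
  obtain ⟨ε, hε, Hs, h0, hrec, hbound⟩ := hfair
  have hsort : ∀ (g : M) (j : ℕ), |sortL LS g j - sortL LP g j| ≤ β :=
    abs_sortL_le LS LP β hβ huc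
  set IS : ℕ → ℝ := fun j => sInf ((fun g => sortL LS g j) '' Hs j) with hIS
  set IP : ℕ → ℝ := fun j => sInf ((fun g => sortL LP g j) '' Hs j) with hIP
  have hISP : ∀ j, IS j ≤ IP j + β := fun j =>
    sInf_image_le _ _ β hβ (fun x => hsort x j) (Hs j)
  refine ⟨fun j h' => match j with
    | 0 => 0
    | j + 1 => ε (j + 1) h' + (IS j - IP j) + (sortL LP h' j - sortL LS h' j),
    ?_, Hs, h0, ?_, ?_⟩
  · rintro (_ | j) h'
    · simp only
      linarith
    · have h1 := hε (j + 1) h'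
      have h2 := hISP j
      have h3 := abs_sub_le_iff.1 (hsort h' j)
      simp only
      linarith [h3.2]
  · intro j
    rw [hrec j]
    ext h'
    simp only [Set.mem_setOf_eq]
    refine and_congr_right fun _ => ?_
    constructor <;> intro hh <;> [skip; skip] <;> · linarith
  · intro j hj
    have hb := hbound j hj
    have h3 := abs_sub_le_iff.1 (hsort h j)
    simp only
    linarith [hISP j, h3.1]
end

section
/- There exists an instance (three groups, two base classifiers, and randomized models) where the exact lexifair vector of sorted group errors is (0.5, 0.5, 0), but for any α > 0, among models with maximum group error at most 0.5 + α, one can achieve second-highest error 0.25 while the minimal achievable third-highest error subject to fixing the first two sorted errors is at least 0.25 − O(α): i.e., the pointwise approximate lexifair errors are not continuous in the slack. -/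
noncomputable def sortVec {K : ℕ} (v : Fin K → ℝ) (j : ℕ) : ℝ :=
  if hj : j < K then v (Tuple.sort v (Fin.rev ⟨j, hj⟩)) else 0

lemma sortVec_zero (v : Fin 3 → ℝ) : sortVec v 0 = max (max (v 0) (v 1)) (v 2) := by
  have hm := Tuple.monotone_sort v
  set σ := Tuple.sort v with hσ
  have h0 : sortVec v 0 = v (σ 2) := by
    simp only [sortVec, dif_pos (by norm_num : (0:ℕ) < 3)]
    rfl
  rw [h0]
  have hge : ∀ j : Fin 3, v j ≤ v (σ 2) := by
    intro j
    have : v (σ (σ.symm j)) ≤ v (σ 2) := hm (Fin.le_last _)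
    simpa using this
  apply le_antisymm
  · generalize σ 2 = j
    fin_cases j <;> simp [le_max_iff, le_refl]
  · simp only [max_le_iff]
    exact ⟨⟨hge 0, hge 1⟩, hge 2⟩

lemma sortVec_two (v : Fin 3 → ℝ) : sortVec v 2 = min (min (v 0) (v 1)) (v 2) := by
  have hm := Tuple.monotone_sort v
  set σ := Tuple.sort v with hσ
  have h0 : sortVec v 2 = v (σ 0) := by
    simp only [sortVec, dif_pos (by norm_num : (2:ℕ) < 3)]
    rfl
  rw [h0]
  have hle : ∀ j : Fin 3, v (σ 0) ≤ v j := by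
    intro j
    have : v (σ 0) ≤ v (σ (σ.symm j)) := hm (Fin.zero_le _)
    simpa using this
  apply le_antisymm
  · simp only [le_min_iff]
    exact ⟨⟨hle 0, hle 1⟩, hle 2⟩
  · generalize σ 0 = j
    fin_cases j <;> simp [min_le_iff, le_refl]

lemma sortVec_sum (v : Fin 3 → ℝ) :
    sortVec v 0 + sortVec v 1 + sortVec v 2 = v 0 + v 1 + v 2 := by
  have h := Equiv.sum_comp (Tuple.sort v) v
  rw [Fin.sum_univ_three, Fin.sum_univ_three] at h
  have e0 : sortVec v 0 = v (Tuple.sort v 2) := by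
    simp only [sortVec, dif_pos (by norm_num : (0:ℕ) < 3)]; rfl
  have e1 : sortVec v 1 = v (Tuple.sort v 1) := by
    simp only [sortVec, dif_pos (by norm_num : (1:ℕ) < 3)]; rfl
  have e2 : sortVec v 2 = v (Tuple.sort v 0) := by
    simp only [sortVec, dif_pos (by norm_num : (2:ℕ) < 3)]; rfl
  rw [e0, e1, e2]; linarith

/-- Instability of the pointwise approximate-lexifair definition. With three
groups and base error vectors (1/2, 1/2, 0) and (1/2 + 2α, 0, 1/2), and models
being convex combinations p·h₁ + (1−p)·h₂: the minimax value is 1/2, achieved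
only at p = 1 whose sorted errors are (1/2, 1/2, 0); yet the uniform mixture
p = 1/2 has sorted errors (1/2 + α, 1/4, 1/4), and among all models whose max
error is at most 1/2 + α and whose second-highest error is at most 1/4, the
third-highest error is at least 1/4 − α — far from the exact lexifair value 0. -/
theorem stmt_16 (α : ℝ) (hα : 0 < α) (hα4 : α ≤ 1 / 4)
    (e : ℝ → Fin 3 → ℝ)
    (he : ∀ p i, e p i =
      p * ![(1 : ℝ) / 2, 1 / 2, 0] i + (1 - p) * ![(1 : ℝ) / 2 + 2 * α, 0, 1 / 2] i) :
    (∀ p ∈ Set.Icc (0 : ℝ) 1, 1 / 2 ≤ sortVec (e p) 0) ∧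
    (∀ p ∈ Set.Icc (0 : ℝ) 1, sortVec (e p) 0 ≤ 1 / 2 → p = 1) ∧
    (sortVec (e 1) 0 = 1 / 2 ∧ sortVec (e 1) 1 = 1 / 2 ∧ sortVec (e 1) 2 = 0) ∧
    (sortVec (e (1 / 2)) 0 = 1 / 2 + α ∧ sortVec (e (1 / 2)) 1 = 1 / 4 ∧
      sortVec (e (1 / 2)) 2 = 1 / 4) ∧
    (∀ p ∈ Set.Icc (0 : ℝ) 1, sortVec (e p) 0 ≤ 1 / 2 + α →
      sortVec (e p) 1 ≤ 1 / 4 → 1 / 4 - α ≤ sortVec (e p) 2) := by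
  have hval : ∀ p, e p 0 = 1 / 2 + 2 * α * (1 - p) ∧ e p 1 = p / 2 ∧ e p 2 = (1 - p) / 2 := by
    intro p
    refine ⟨?_, ?_, ?_⟩
    · rw [he p 0]; simp [Matrix.cons_val_zero]; ring
    · rw [he p 1]; simp; ring
    · rw [he p 2]; simp; ring
  refine ⟨?_, ?_, ?_, ?_, ?_⟩
  · intro p hp
    obtain ⟨h0, h1, h2⟩ := hval p
    have hA : e p 0 ≤ sortVec (e p) 0 := by
      rw [sortVec_zero]; exact le_trans (le_max_left _ _) (le_max_left _ _)
    nlinarith [mul_nonneg hα.le (by linarith [hp.2] : (0:ℝ) ≤ 1 - p)]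
  · intro p hp hle
    obtain ⟨h0, h1, h2⟩ := hval p
    have hA : e p 0 ≤ sortVec (e p) 0 := by
      rw [sortVec_zero]; exact le_trans (le_max_left _ _) (le_max_left _ _)
    have h5 : 2 * α * (1 - p) ≤ 2 * α * 0 := by linarith
    have h6 : 1 - p ≤ 0 := le_of_mul_le_mul_left h5 (by linarith)
    exact le_antisymm hp.2 (by linarith)
  · obtain ⟨h0, h1, h2⟩ := hval 1
    norm_num at h0 h1 h2
    have hz := sortVec_zero (e 1)
    have ht := sortVec_two (e 1)
    have hs := sortVec_sum (e 1)
    rw [h0, h1, h2] at hz ht hs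
    norm_num at hz ht
    refine ⟨hz, by linarith, ht⟩
  · obtain ⟨h0, h1, h2⟩ := hval (1/2)
    norm_num at h0 h1 h2
    have hz := sortVec_zero (e (1/2))
    have ht := sortVec_two (e (1/2))
    have hs := sortVec_sum (e (1/2))
    rw [h0, h1, h2] at hz ht hs
    have hmax : (1 / 2 + 2 * α * (1 / 2) : ℝ) ⊔ (1 / 4) = 1 / 2 + 2 * α * (1 / 2) :=
      max_eq_left (by linarith)
    rw [hmax, hmax] at hz
    have hmin : (1 / 2 + 2 * α * (1 / 2) : ℝ) ⊓ (1 / 4) = 1 / 4 := min_eq_right (by linarith)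
    rw [hmin, min_self] at ht
    have hz' : sortVec (e (1 / 2)) 0 = 1 / 2 + α := by rw [hz]; ring
    exact ⟨hz', by linarith, ht⟩
  · intro p hp hle0 hle1
    obtain ⟨h0, h1, h2⟩ := hval p
    have hA : e p 0 ≤ sortVec (e p) 0 := by
      rw [sortVec_zero]; exact le_trans (le_max_left _ _) (le_max_left _ _)
    have hs := sortVec_sum (e p)
    rw [h0, h1, h2] at hs
    nlinarith [mul_nonneg hα.le (by linarith [hp.2] : (0:ℝ) ≤ 1 - p)]
end
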